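/- Let K/F be a finite Galois extension of fields and let B be a commutative F-algebra. Let each element σ of the Galois group Gal(K/F) act on the K-algebra K ⊗[F] B by the algebra automorphism σ ⊗ id. Then the fixed-point subalgebra {z ∈ K ⊗[F] B : (σ ⊗ id)(z) = z for all σ ∈ Gal(K/F)} is exactly the range of the canonical F-algebra homomorphism B → K ⊗[F] B sending b to 1 ⊗ b; moreover this homomorphism is injective, so the fixed-point subalgebra is isomorphic as an F-algebra to B. -/

import Mathlib

/-!
Pick an `F`-basis of `B`; it is also a `K`-basis of `K ⊗[F] B`, and `σ ⊗ id` acts on coordinates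
in this basis by applying `σ`. A fixed element therefore has all its coordinates in the fixed
field of `Gal(K/F)`, which is `F`, so it is `1 ⊗ b`. Injectivity of `b ↦ 1 ⊗ b` is flatness of `B`
over the field `F`.
-/

open TensorProduct

namespace Module.Basis

variable {R A M ι : Type*} [CommSemiring R] [Semiring A] [Algebra R A]
  [AddCommMonoid M] [Module R M] (b : Basis ι R M)

theorem baseChange_repr_rTensor (f : A →ₗ[R] A) (z : A ⊗[R] M) (i : ι) :
    (b.baseChange A).repr (f.rTensor M z) i = f ((b.baseChange A).repr z i) := by
  induction z using TensorProduct.induction_on with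
  | zero => simp
  | tmul x m => simp [baseChange_repr_tmul]
  | add x y hx hy => simp only [map_add, Finsupp.add_apply, hx, hy]

theorem exists_one_tmul_eq_of_repr_mem_range (z : A ⊗[R] M)
    (h : ∀ i, (b.baseChange A).repr z i ∈ Set.range (algebraMap R A)) :
    ∃ m : M, (1 : A) ⊗ₜ[R] m = z := by
  choose c hc using h
  refine ⟨∑ i ∈ ((b.baseChange A).repr z).support, c i • b i, ?_⟩
  conv_rhs => rw [← (b.baseChange A).linearCombination_repr z]
  simp only [Finsupp.linearCombination_apply, Finsupp.sum, tmul_sum, baseChange_apply, ← hc,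
    algebraMap_smul, smul_tmul', smul_tmul]

end Module.Basis

theorem galois_descent_algebra_general
    (F K : Type*) [Field F] [Field K] [Algebra F K]
    [IsGalois F K]
    (B : Type*) [CommRing B] [Algebra F B] :
    (∀ z : K ⊗[F] B,
        (∀ σ : K ≃ₐ[F] K,
            Algebra.TensorProduct.map (σ.toAlgHom) (AlgHom.id F B) z = z) ↔
          z ∈ (Algebra.TensorProduct.includeRight : B →ₐ[F] K ⊗[F] B).range) ∧
      Function.Injective
        (Algebra.TensorProduct.includeRight : B →ₐ[F] K ⊗[F] B) := by
  refine ⟨fun z => ⟨fun hfix => ?_, ?_⟩,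
    Algebra.TensorProduct.includeRight_injective (algebraMap F K).injective⟩
  · let b := Module.Free.chooseBasis F B
    have hcoord (i) : (b.baseChange K).repr z i ∈ Set.range (algebraMap F K) :=
      (InfiniteGalois.mem_range_algebraMap_iff_fixed _).2 fun σ => by
        -- `Algebra.TensorProduct.map σ (AlgHom.id F B)` is `σ.toLinearMap.rTensor B` definitionally
        rw [← AlgEquiv.toLinearMap_apply, ← b.baseChange_repr_rTensor]
        exact congrArg (fun w => (b.baseChange K).repr w i) (hfix σ)
    exact b.exists_one_tmul_eq_of_repr_mem_range z hcoord
  · rintro ⟨m, rfl⟩ σ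
    simp

/-- Galois descent for commutative algebras.  For a finite Galois
extension `K/F` and a commutative `F`-algebra `B`, the fixed points of the
`Gal(K/F)`-action `σ ⊗ id` on `K ⊗[F] B` are exactly the range of the
canonical map `b ↦ 1 ⊗ b`, and this map is injective, so the fixed-point
subalgebra is isomorphic to `B`. -/
theorem galois_descent_algebra
    (F K : Type*) [Field F] [Field K] [Algebra F K]
    [FiniteDimensional F K] [IsGalois F K]
    (B : Type*) [CommRing B] [Algebra F B] :
    (∀ z : K ⊗[F] B,
        (∀ σ : K ≃ₐ[F] K,
            Algebra.TensorProduct.map (σ.toAlgHom) (AlgHom.id F B) z = z) ↔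
          z ∈ (Algebra.TensorProduct.includeRight : B →ₐ[F] K ⊗[F] B).range) ∧
      Function.Injective
        (Algebra.TensorProduct.includeRight : B →ₐ[F] K ⊗[F] B) :=
  galois_descent_algebra_general F K B
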